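/- Let n ≥ 3, ψ a permutation-symmetric state of n qudits, and X a matrix with X_{(1)}ψ ∈ S. Then for any natural numbers p_1,…,p_n with p_1+⋯+p_n = p, (X^{p_1} ⊗ X^{p_2} ⊗ ⋯ ⊗ X^{p_n}) ψ = X^p_{(1)} ψ. -/
import Mathlib


open Matrix BigOperators Polynomial

/-- Permutation symmetry of an `n`-qudit state represented by its amplitudes. -/
def PSym {n d : ℕ} (ψ : (Fin n → Fin d) → ℂ) : Prop :=
  ∀ σ : Equiv.Perm (Fin n), ∀ x : Fin n → Fin d, ψ (x ∘ σ) = ψ x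

/-- The operator `B` acting on the `k`-th tensor factor (identity elsewhere). -/
noncomputable def appAt {n d : ℕ} (k : Fin n) (B : Matrix (Fin d) (Fin d) ℂ)
    (ψ : (Fin n → Fin d) → ℂ) : (Fin n → Fin d) → ℂ :=
  fun x => ∑ j : Fin d, B (x k) j * ψ (Function.update x k j)

/-- The operator `A 1 ⊗ A 2 ⊗ ⋯ ⊗ A n` acting on an `n`-qudit state. -/
noncomputable def appAll {n d : ℕ} (A : Fin n → Matrix (Fin d) (Fin d) ℂ)
    (ψ : (Fin n → Fin d) → ℂ) : (Fin n → Fin d) → ℂ :=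
  fun x => ∑ y : Fin n → Fin d, (∏ k, A k (x k) (y k)) * ψ y

section Aux

variable {n d : ℕ}

lemma appAt_perm {ψ : (Fin n → Fin d) → ℂ} (hψ : PSym ψ) (σ : Equiv.Perm (Fin n))
    (k : Fin n) (B : Matrix (Fin d) (Fin d) ℂ) (x : Fin n → Fin d) :
    appAt k B ψ (x ∘ σ) = appAt (σ k) B ψ x := by
  unfold appAt
  refine Finset.sum_congr rfl fun j _ => ?_
  have h2 : Function.update (x ∘ σ) k j = (Function.update x (σ k) j) ∘ σ := by
    have := Function.update_comp_equiv x σ (σ k) j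
    simpa using this.symm
  rw [show (x ∘ σ) k = x (σ k) from rfl, h2, hψ σ]

lemma appAt_eq {ψ : (Fin n → Fin d) → ℂ} (hψ : PSym ψ) (k0 : Fin n)
    (B : Matrix (Fin d) (Fin d) ℂ) (hs : PSym (appAt k0 B ψ)) (k : Fin n) :
    appAt k B ψ = appAt k0 B ψ := by
  funext x
  have h := appAt_perm hψ (Equiv.swap k0 k) k0 B x
  rw [Equiv.swap_apply_left] at h
  rw [← h, hs (Equiv.swap k0 k) x]

lemma appAt_appAt_same (k : Fin n) (A B : Matrix (Fin d) (Fin d) ℂ)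
    (ψ : (Fin n → Fin d) → ℂ) :
    appAt k A (appAt k B ψ) = appAt k (A * B) ψ := by
  funext x
  unfold appAt
  simp only [Function.update_self, Function.update_idem, Finset.mul_sum,
    Matrix.mul_apply, Finset.sum_mul]
  rw [Finset.sum_comm]
  exact Finset.sum_congr rfl fun i _ => Finset.sum_congr rfl fun j _ => by ring

lemma appAt_comm {k l : Fin n} (h : k ≠ l) (A B : Matrix (Fin d) (Fin d) ℂ)
    (ψ : (Fin n → Fin d) → ℂ) :
    appAt k A (appAt l B ψ) = appAt l B (appAt k A ψ) := by
  funext x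
  unfold appAt
  simp only [Finset.mul_sum]
  rw [Finset.sum_comm]
  refine Finset.sum_congr rfl fun i _ => Finset.sum_congr rfl fun j _ => ?_
  rw [Function.update_of_ne h.symm, Function.update_of_ne h,
    Function.update_comm h]
  ring

lemma appAt_one (k : Fin n) (ψ : (Fin n → Fin d) → ℂ) :
    appAt k (1 : Matrix (Fin d) (Fin d) ℂ) ψ = ψ := by
  funext x
  unfold appAt
  simp [Matrix.one_apply]

lemma appAll_one (ψ : (Fin n → Fin d) → ℂ) :
    appAll (fun _ => (1 : Matrix (Fin d) (Fin d) ℂ)) ψ = ψ := by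
  funext x
  unfold appAll
  have h : ∀ y : Fin n → Fin d,
      (∏ k, (1 : Matrix (Fin d) (Fin d) ℂ) (x k) (y k)) = if y = x then 1 else 0 := by
    intro y
    by_cases hxy : y = x
    · subst hxy; simp [Matrix.one_apply]
    · obtain ⟨k, hk⟩ := Function.ne_iff.mp hxy
      rw [if_neg hxy]
      refine Finset.prod_eq_zero (Finset.mem_univ k) ?_
      simp [Matrix.one_apply, Ne.symm hk]
  simp only [h, ite_mul, one_mul, zero_mul]
  simp

lemma appAt_appAll (k : Fin n) (B : Matrix (Fin d) (Fin d) ℂ)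
    (A : Fin n → Matrix (Fin d) (Fin d) ℂ) (ψ : (Fin n → Fin d) → ℂ) :
    appAt k B (appAll A ψ) = appAll (Function.update A k (B * A k)) ψ := by
  funext x
  unfold appAt appAll
  have hL : ∀ (j : Fin d) (y : Fin n → Fin d),
      (∏ l, A l (Function.update x k j l) (y l))
        = A k j (y k) * ∏ l ∈ Finset.univ.erase k, A l (x l) (y l) := by
    intro j y
    rw [← Finset.mul_prod_erase Finset.univ _ (Finset.mem_univ k),
      Function.update_self]
    congr 1
    exact Finset.prod_congr rfl fun l hl => by
      rw [Function.update_of_ne (Finset.ne_of_mem_erase hl)]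
  have hR : ∀ y : Fin n → Fin d,
      (∏ l, Function.update A k (B * A k) l (x l) (y l))
        = (B * A k) (x k) (y k) * ∏ l ∈ Finset.univ.erase k, A l (x l) (y l) := by
    intro y
    rw [← Finset.mul_prod_erase Finset.univ _ (Finset.mem_univ k),
      Function.update_self]
    congr 1
    exact Finset.prod_congr rfl fun l hl => by
      rw [Function.update_of_ne (Finset.ne_of_mem_erase hl)]
  simp only [hL, hR, Matrix.mul_apply, Finset.sum_mul, Finset.mul_sum]
  rw [Finset.sum_comm]
  exact Finset.sum_congr rfl fun y _ => Finset.sum_congr rfl fun j _ => by ring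

lemma appAt_pow_step {ψ : (Fin n → Fin d) → ℂ} (hψ : PSym ψ)
    (X : Matrix (Fin d) (Fin d) ℂ) (i0 : Fin n) (hX : PSym (appAt i0 X ψ))
    (m : ℕ) (k : Fin n) :
    appAt k X (appAt i0 (X ^ m) ψ) = appAt i0 (X ^ (m + 1)) ψ := by
  by_cases hk : k = i0
  · subst hk
    rw [appAt_appAt_same, ← pow_succ']
  · rw [appAt_comm hk, appAt_eq hψ i0 X hX k, appAt_appAt_same, ← pow_succ]

lemma appAt_pow {ψ : (Fin n → Fin d) → ℂ} (hψ : PSym ψ)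
    (X : Matrix (Fin d) (Fin d) ℂ) (i0 : Fin n) (hX : PSym (appAt i0 X ψ))
    (a : ℕ) (k : Fin n) (m : ℕ) :
    appAt k (X ^ a) (appAt i0 (X ^ m) ψ) = appAt i0 (X ^ (a + m)) ψ := by
  induction a with
  | zero => rw [pow_zero, appAt_one, Nat.zero_add]
  | succ a ih =>
      rw [show a + 1 + m = a + m + 1 from by omega, pow_succ',
        ← appAt_appAt_same, ih, appAt_pow_step hψ X i0 hX]

end Aux

theorem stmt_4 {n d : ℕ} (hn : 3 ≤ n) (ψ : (Fin n → Fin d) → ℂ) (hψ : PSym ψ)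
    (X : Matrix (Fin d) (Fin d) ℂ)
    (hX : PSym (appAt ⟨0, by omega⟩ X ψ))
    (p : Fin n → ℕ) :
    appAll (fun k => X ^ p k) ψ = appAt ⟨0, by omega⟩ (X ^ (∑ k, p k)) ψ := by
  set i0 : Fin n := ⟨0, by omega⟩ with hi0
  have main : ∀ s : Finset (Fin n),
      appAll (fun k => if k ∈ s then X ^ p k else 1) ψ
        = appAt i0 (X ^ (∑ k ∈ s, p k)) ψ := by
    intro s
    induction s using Finset.induction with
    | empty => simp [appAll_one, appAt_one]
    | @insert a s ha ih =>
        have hfun : (fun k => if k ∈ insert a s then X ^ p k else 1)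
            = Function.update (fun k => if k ∈ s then X ^ p k else 1) a
                (X ^ p a * (fun k => if k ∈ s then X ^ p k else 1) a) := by
          funext k
          by_cases hka : k = a
          · subst hka; simp [ha]
          · simp [Function.update_of_ne hka, hka, Finset.mem_insert]
        rw [hfun, ← appAt_appAll, ih, appAt_pow hψ X i0 hX, Finset.sum_insert ha]
  have h := main Finset.univ
  simpa using h
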